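/- arXiv:1902.05656 — 2 statements merged into one kernel-verified Lean document; each statement's English description precedes it below -/
import Mathlib

section
/- Let (Q,·) and (Q,∘) be finite quasigroups on the same set Q and let α, β, γ be bijections of Q such that γ(x·y) = α(y)∘β(x) for all x, y ∈ Q (an antiisotopy). Then the number of rectangles of (Q,·) equals the number of rectangles of (Q,∘). -/
/-- A binary operation is a quasigroup operation if both equations `a·x = b` and
`y·a = b` have unique solutions. -/
def IsQuasigroup {Q : Type*} (m : Q → Q → Q) : Prop :=
  (∀ a b : Q, ∃! x : Q, m a x = b) ∧ (∀ a b : Q, ∃! y : Q, m y a = b)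

/-- `⟨x, y, z, u⟩` is a rectangle of the operation `m`. -/
def IsRectangle {Q : Type*} (m : Q → Q → Q) (x y z u : Q) : Prop :=
  x ≠ z ∧ y ≠ u ∧ m x y = m z u ∧ m x u = m z y

/-- Antiisotopic finite quasigroups (`γ (m x y) = m' (α y) (β x)` for
bijections `α, β, γ`) have the same number of rectangles. -/
theorem antiisotopic_quasigroups_same_number_of_rectangles {Q : Type*} [Finite Q]
    (m m' : Q → Q → Q) (hm : IsQuasigroup m) (hm' : IsQuasigroup m')
    (α β γ : Q ≃ Q) (hanti : ∀ x y : Q, γ (m x y) = m' (α y) (β x)) :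
    Nat.card {p : Q × Q × Q × Q | IsRectangle m p.1 p.2.1 p.2.2.1 p.2.2.2} =
      Nat.card {p : Q × Q × Q × Q | IsRectangle m' p.1 p.2.1 p.2.2.1 p.2.2.2} := by
  apply Nat.card_congr
  refine ⟨fun ⟨⟨x, y, z, u⟩, h⟩ => ⟨(α y, β x, α u, β z), ?_⟩,
          fun ⟨⟨x, y, z, u⟩, h⟩ => ⟨(β.symm y, α.symm x, β.symm u, α.symm z), ?_⟩,
          ?_, ?_⟩
  · obtain ⟨h1, h2, h3, h4⟩ := h
    refine ⟨fun hc => h2 (α.injective hc), fun hc => h1 (β.injective hc), ?_, ?_⟩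
    · rw [← hanti, ← hanti, h3]
    · rw [← hanti, ← hanti, h4]
  · obtain ⟨h1, h2, h3, h4⟩ := h
    refine ⟨fun hc => h2 (β.symm.injective hc), fun hc => h1 (α.symm.injective hc), ?_, ?_⟩
    · apply γ.injective
      rw [hanti, hanti, Equiv.apply_symm_apply, Equiv.apply_symm_apply,
        Equiv.apply_symm_apply, Equiv.apply_symm_apply, h3]
    · apply γ.injective
      rw [hanti, hanti, Equiv.apply_symm_apply, Equiv.apply_symm_apply,
        Equiv.apply_symm_apply, Equiv.apply_symm_apply, h4]
  · rintro ⟨⟨x, y, z, u⟩, h⟩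
    simp
  · rintro ⟨⟨x, y, z, u⟩, h⟩
    simp
end

section
/- Let (Q,·) be a quasigroup, ⟨a,b,c,d⟩ a rectangle of Q, and (α,β,γ) an autotopism of (Q,·), i.e., bijections of Q with α(x)·β(y) = γ(x·y) for all x, y ∈ Q. Let (Q,∘) be the rectangle transformation of (Q,·) by ⟨a,b,c,d⟩ and let (Q,*) be the rectangle transformation of (Q,·) by ⟨α(a), β(b), α(c), β(d)⟩. Then γ(x∘y) = α(x)*β(y) for all x, y ∈ Q; in particular (Q,∘) and (Q,*) are isotopic. -/
/-- The rectangle transformation of `m` by the rectangle `⟨a,b,c,d⟩`: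
`a∘b = a·d`, `c∘b = a·b`, `c∘d = c·b`, `a∘d = c·d`, and `x∘y = x·y` otherwise. -/
def rectTransform {Q : Type*} [DecidableEq Q] (m : Q → Q → Q) (a b c d : Q) :
    Q → Q → Q := fun x y =>
  if x = a ∧ y = b then m a d
  else if x = c ∧ y = b then m a b
  else if x = c ∧ y = d then m c b
  else if x = a ∧ y = d then m c d
  else m x y

/-- Rectangle transformations by equivalent rectangles give isotopic
quasigroups: if `(α,β,γ)` is an autotopism of the quasigroup `(Q, m)` and `⟨a,b,c,d⟩`
a rectangle of `(Q, m)`, then `γ (x ∘ y) = (α x) * (β y)` for all `x, y`, where `∘` is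
the rectangle transformation by `⟨a,b,c,d⟩` and `*` is the rectangle transformation
by `⟨α a, β b, α c, β d⟩`. -/
theorem rectTransform_equivalent_isotopic {Q : Type*} [DecidableEq Q]
    (m : Q → Q → Q) (hm : IsQuasigroup m) (a b c d : Q)
    (hrect : IsRectangle m a b c d) (α β γ : Q ≃ Q)
    (hauto : ∀ x y : Q, m (α x) (β y) = γ (m x y)) :
    ∀ x y : Q, γ (rectTransform m a b c d x y) =
      rectTransform m (α a) (β b) (α c) (β d) (α x) (β y) := by
  intro x y
  unfold rectTransform
  simp only [EmbeddingLike.apply_eq_iff_eq]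
  split_ifs <;> simp_all [← hauto]
end
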